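/- Whiskering of laminated 2-tracks by 1-tracks is well defined: if g and g' are laminated rank-2 homotopic 2-paths in M, γ and γ' are rank-1 homotopic 1-paths, and γ(1) equals the single point g(ℝ×{0}), then the left whiskerings γ∘g and γ'∘g' are laminated rank-2 homotopic; similarly, if the single point g(ℝ×{1}) equals γ(0), then the right whiskerings g∘γ and g'∘γ' are laminated rank-2 homotopic. -/

import Mathlib

open scoped Manifold

variable (E : Type*) [NormedAddCommGroup E] [NormedSpace ℝ E] [FiniteDimensional ℝ E]
variable {M : Type*} [TopologicalSpace M] [ChartedSpace E M]
  [IsManifold 𝓘(ℝ, E) (⊤ : ℕ∞) M]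

/-- A 1-path in `M`: a smooth map `ℝ → M` that is constant near `(-∞, 0]` and near
`[1, ∞)` (in the sense of the `ε`-conditions). -/
def IsOnePath (γ : ℝ → M) : Prop :=
  ContMDiff 𝓘(ℝ, ℝ) 𝓘(ℝ, E) (⊤ : ℕ∞) γ ∧
    ∃ ε > (0 : ℝ), (∀ t ≤ ε, γ t = γ 0) ∧ (∀ t, 1 - ε ≤ t → γ t = γ 1)

/-- A 2-path in `M`, as a smooth map `ℝ × ℝ → M` with coordinates `(s, t)`,
constant near the boundary in each variable, whose images at `t = 0` and `t = 1`
are single points. -/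
def IsTwoPath (g : ℝ × ℝ → M) : Prop :=
  ContMDiff 𝓘(ℝ, ℝ × ℝ) 𝓘(ℝ, E) (⊤ : ℕ∞) g ∧
    (∃ ε > (0 : ℝ),
      (∀ s t, s ≤ ε → g (s, t) = g (0, t)) ∧
      (∀ s t, 1 - ε ≤ s → g (s, t) = g (1, t)) ∧
      (∀ s t, t ≤ ε → g (s, t) = g (s, 0)) ∧
      (∀ s t, 1 - ε ≤ t → g (s, t) = g (s, 1))) ∧
    (∀ s s', g (s, 0) = g (s', 0)) ∧ (∀ s s', g (s, 1) = g (s', 1))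

/-- A rank-1 homotopy: a 2-path whose differential has rank at most 1 at every point. -/
def IsRank1Homotopy (h : ℝ × ℝ → M) : Prop :=
  IsTwoPath E h ∧
    ∀ p : ℝ × ℝ,
      Module.finrank ℝ
        (LinearMap.range (mfderiv 𝓘(ℝ, ℝ × ℝ) 𝓘(ℝ, E) h p).toLinearMap) ≤ 1

/-- Two 1-paths are rank-1 homotopic if they are joined by a rank-1 homotopy. -/
def Rank1Homotopic (γ γ' : ℝ → M) : Prop :=
  ∃ h : ℝ × ℝ → M, IsRank1Homotopy E h ∧ (∀ t, h (0, t) = γ t) ∧ (∀ t, h (1, t) = γ' t)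

/-- A 3-path in `M`, as a smooth map `ℝ × ℝ × ℝ → M` with coordinates `(r, s, t)`. -/
def IsThreePath (α : ℝ × ℝ × ℝ → M) : Prop :=
  ContMDiff 𝓘(ℝ, ℝ × ℝ × ℝ) 𝓘(ℝ, E) (⊤ : ℕ∞) α ∧
    (∃ ε > (0 : ℝ),
      (∀ r s t, r ≤ ε → α (r, s, t) = α (0, s, t)) ∧
      (∀ r s t, 1 - ε ≤ r → α (r, s, t) = α (1, s, t)) ∧
      (∀ r s t, s ≤ ε → α (r, s, t) = α (r, 0, t)) ∧
      (∀ r s t, 1 - ε ≤ s → α (r, s, t) = α (r, 1, t)) ∧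
      (∀ r s t, t ≤ ε → α (r, s, t) = α (r, s, 0)) ∧
      (∀ r s t, 1 - ε ≤ t → α (r, s, t) = α (r, s, 1))) ∧
    (∀ r s r' s', α (r, s, 0) = α (r', s', 0)) ∧
    (∀ r s r' s', α (r, s, 1) = α (r', s', 1))

/-- A rank-2 homotopy: a 3-path whose differential has rank at most 2 at every point and
whose restrictions to `s = 0` and `s = 1` are rank-1 homotopies. -/
def IsRank2Homotopy (α : ℝ × ℝ × ℝ → M) : Prop :=
  IsThreePath E α ∧
    (∀ p : ℝ × ℝ × ℝ,
      Module.finrank ℝ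
        (LinearMap.range (mfderiv 𝓘(ℝ, ℝ × ℝ × ℝ) 𝓘(ℝ, E) α p).toLinearMap) ≤ 2) ∧
    IsRank1Homotopy E (fun p : ℝ × ℝ => α (p.1, 0, p.2)) ∧
    IsRank1Homotopy E (fun p : ℝ × ℝ => α (p.1, 1, p.2))

/-- `α` is a rank-2 homotopy from the 2-path `g` to the 2-path `g'`. -/
def Rank2HomotopyFrom (α : ℝ × ℝ × ℝ → M) (g g' : ℝ × ℝ → M) : Prop :=
  IsRank2Homotopy E α ∧ (∀ s t, α (0, s, t) = g (s, t)) ∧ (∀ s t, α (1, s, t) = g' (s, t))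

/-- Two 2-paths are rank-2 homotopic if they are joined by a rank-2 homotopy. -/
def Rank2Homotopic (g g' : ℝ × ℝ → M) : Prop :=
  ∃ α : ℝ × ℝ × ℝ → M, Rank2HomotopyFrom E α g g'

/-- The laminatedness condition for a map `ℝ × ℝ × ℝ → M` with coordinates `(r, s, t)`,
expressed via the partial derivatives (the images of the coordinate vectors under the
differential). -/
def IsLaminated (α : ℝ × ℝ × ℝ → M) : Prop :=
  ∀ r s : ℝ,
    (∀ t : ℝ, ∃ a b : ℝ, (a, b) ≠ (0, 0) ∧
        a • mfderiv 𝓘(ℝ, ℝ × ℝ × ℝ) 𝓘(ℝ, E) α (r, s, t) (1, 0, 0) +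
          b • mfderiv 𝓘(ℝ, ℝ × ℝ × ℝ) 𝓘(ℝ, E) α (r, s, t) (0, 0, 1) = 0) ∨
    (∀ t : ℝ, ∃ a b : ℝ, (a, b) ≠ (0, 0) ∧
        a • mfderiv 𝓘(ℝ, ℝ × ℝ × ℝ) 𝓘(ℝ, E) α (r, s, t) (0, 1, 0) +
          b • mfderiv 𝓘(ℝ, ℝ × ℝ × ℝ) 𝓘(ℝ, E) α (r, s, t) (0, 0, 1) = 0) ∨
    (∃ a b : ℝ, (a, b) ≠ (0, 0) ∧ ∀ t : ℝ,
        a • mfderiv 𝓘(ℝ, ℝ × ℝ × ℝ) 𝓘(ℝ, E) α (r, s, t) (1, 0, 0) +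
          b • mfderiv 𝓘(ℝ, ℝ × ℝ × ℝ) 𝓘(ℝ, E) α (r, s, t) (0, 1, 0) = 0)

/-- A laminated rank-2 homotopy. -/
def IsLaminatedRank2Homotopy (α : ℝ × ℝ × ℝ → M) : Prop :=
  IsRank2Homotopy E α ∧ IsLaminated E α

/-- Two 2-paths are laminated rank-2 homotopic if they are joined by a laminated
rank-2 homotopy. -/
def LamRank2Homotopic (g g' : ℝ × ℝ → M) : Prop :=
  ∃ α : ℝ × ℝ × ℝ → M, IsLaminatedRank2Homotopy E α ∧
    (∀ s t, α (0, s, t) = g (s, t)) ∧ (∀ s t, α (1, s, t) = g' (s, t))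

/-- Left whiskering of a 2-path `g` with a 1-path `γ`. -/
noncomputable def leftWhisker (γ : ℝ → M) (g : ℝ × ℝ → M) : ℝ × ℝ → M := fun p =>
  if p.2 ≤ 1 / 2 then γ (2 * p.2) else g (p.1, 2 * p.2 - 1)

/-- Right whiskering of a 2-path `g` with a 1-path `γ`. -/
noncomputable def rightWhisker (g : ℝ × ℝ → M) (γ : ℝ → M) : ℝ × ℝ → M := fun p =>
  if p.2 ≤ 1 / 2 then g (p.1, 2 * p.2) else γ (2 * p.2 - 1)

/-!
Let `β` be a laminated rank-2 homotopy from `g` to `g'` and `h` a rank-1 homotopy from `γ` to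
`γ'`. The whiskered homotopy performs the two one after the other in the `r`-direction, and
concatenates them in `t`: for `r` in `[1/5, 2/5]` it runs `h` with `β` frozen at `g`, for `r` in
`[3/5, 4/5]` it runs `β` with `h` frozen at `γ'`. Both pieces are constant near the seam
`t = 1/2`, so the concatenation is smooth, and ranks are local. For lamination, look at one
`t`-line: while `h` moves, the `β`-piece has `∂_r = 0` and the `h`-piece has rank at most 1, so
condition (i) holds along the whole line; while `β` moves, the `h`-piece has `∂_r = ∂_s = 0`,
so whichever condition `β` satisfies on its line survives.
-/

open scoped ContDiff

section LinearAlgebra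

variable {V : Type*} [AddCommGroup V] [Module ℝ V]

def Dependent (u v : V) : Prop :=
  ∃ a b : ℝ, (a, b) ≠ (0, 0) ∧ a • u + b • v = 0

theorem dependent_of_left_eq_zero {u : V} (v : V) (hu : u = 0) : Dependent u v :=
  ⟨1, 0, by simp, by simp [hu]⟩

theorem dependent_of_mem_of_finrank_le_one [FiniteDimensional ℝ V] {S : Submodule ℝ V}
    (hS : Module.finrank ℝ S ≤ 1) {u v : V} (hu : u ∈ S) (hv : v ∈ S) : Dependent u v := by
  by_cases hu0 : u = 0
  · exact dependent_of_left_eq_zero v hu0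
  have hspan : Submodule.span ℝ {u} = S :=
    Submodule.eq_of_le_of_finrank_le (Submodule.span_singleton_le_iff_mem u S |>.2 hu)
      (hS.trans (finrank_span_singleton hu0).ge)
  obtain ⟨c, rfl⟩ := Submodule.mem_span_singleton.1 (hspan ▸ hv)
  exact ⟨c, -1, by simp, by simp⟩

/-- The coefficients are chosen before `u` and `v`, as condition (iii) of lamination needs one
pair of coefficients for a whole line. -/
theorem exists_coeffs_smul_smul {a b : ℝ} (hab : (a, b) ≠ (0, 0)) (c d : ℝ) :
    ∃ a' b' : ℝ, (a', b') ≠ (0, 0) ∧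
      ∀ u v : V, a • u + b • v = 0 → a' • (c • u) + b' • (d • v) = 0 := by
  by_cases hc : c = 0
  · exact ⟨1, 0, by simp, fun u v _ => by simp [hc]⟩
  by_cases hd : d = 0
  · exact ⟨0, 1, by simp, fun u v _ => by simp [hd]⟩
  refine ⟨a / c, b / d, by simpa [Prod.ext_iff, hc, hd] using hab, fun u v h => ?_⟩
  simpa [smul_smul, hc, hd] using h

theorem Dependent.smul_smul {u v : V} (h : Dependent u v) (c d : ℝ) :
    Dependent (c • u) (d • v) := by
  obtain ⟨a, b, hab, h⟩ := h
  obtain ⟨a', b', hab', himp⟩ := exists_coeffs_smul_smul (V := V) hab c d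
  exact ⟨a', b', hab', himp u v h⟩

/-- Lamination of one `t`-line, phrased for the set of triples `(∂_r α, ∂_s α, ∂_t α)` met
along it, so that the line of a concatenation is handled through the union of two such sets. -/
def LaminatedSet (T : Set (V × V × V)) : Prop :=
  (∀ x ∈ T, Dependent x.1 x.2.2) ∨ (∀ x ∈ T, Dependent x.2.1 x.2.2) ∨
    ∃ a b : ℝ, (a, b) ≠ (0, 0) ∧ ∀ x ∈ T, a • x.1 + b • x.2.1 = 0

theorem LaminatedSet.mono {S T : Set (V × V × V)} (hT : LaminatedSet T) (hST : S ⊆ T) :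
    LaminatedSet S := by
  rcases hT with h | h | ⟨a, b, hab, h⟩
  · exact .inl fun x hx => h x (hST hx)
  · exact .inr <| .inl fun x hx => h x (hST hx)
  · exact .inr <| .inr ⟨a, b, hab, fun x hx => h x (hST hx)⟩

theorem LaminatedSet.image_smul {T : Set (V × V × V)} (hT : LaminatedSet T) (c d e : ℝ) :
    LaminatedSet ((fun x => (c • x.1, d • x.2.1, e • x.2.2)) '' T) := by
  rcases hT with h | h | ⟨a, b, hab, h⟩
  · exact .inl <| Set.forall_mem_image.2 fun x hx => (h x hx).smul_smul c e
  · exact .inr <| .inl <| Set.forall_mem_image.2 fun x hx => (h x hx).smul_smul d e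
  · obtain ⟨a', b', hab', himp⟩ := exists_coeffs_smul_smul (V := V) hab c d
    exact .inr <| .inr ⟨a', b', hab', Set.forall_mem_image.2 fun x hx => himp _ _ (h x hx)⟩

theorem LaminatedSet.union_of_fst_snd_eq_zero {S T : Set (V × V × V)} (hS : LaminatedSet S)
    (hT : ∀ x ∈ T, x.1 = 0 ∧ x.2.1 = 0) : LaminatedSet (S ∪ T) := by
  rcases hS with h | h | ⟨a, b, hab, h⟩
  · exact .inl fun x hx => hx.elim (h x) fun hx => dependent_of_left_eq_zero _ (hT x hx).1
  · exact .inr <| .inl fun x hx => hx.elim (h x) fun hx => dependent_of_left_eq_zero _ (hT x hx).2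
  · refine .inr <| .inr ⟨a, b, hab, fun x hx => hx.elim (h x) fun hx => ?_⟩
    simp [hT x hx]

theorem laminatedSet_union_of_fst_eq_zero {S T : Set (V × V × V)}
    (hS : ∀ x ∈ S, Dependent x.1 x.2.2) (hT : ∀ x ∈ T, x.1 = 0) : LaminatedSet (S ∪ T) :=
  .inl fun x hx => hx.elim (hS x) fun hx => dependent_of_left_eq_zero _ (hT x hx)

end LinearAlgebra

section Calculus

open Topology

variable {E}

instance (x : M) : FiniteDimensional ℝ (TangentSpace 𝓘(ℝ, E) x) :=
  inferInstanceAs (FiniteDimensional ℝ E)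

omit [FiniteDimensional ℝ E] [IsManifold 𝓘(ℝ, E) ∞ M]

variable {X Y : Type*} [NormedAddCommGroup X] [NormedSpace ℝ X]
  [NormedAddCommGroup Y] [NormedSpace ℝ Y]

theorem mfderiv_comp_apply_of_differentiableAt {F : Y → M} {A : X → Y} {p : X}
    (hF : MDifferentiableAt 𝓘(ℝ, Y) 𝓘(ℝ, E) F (A p)) (hA : DifferentiableAt ℝ A p) (v : X) :
    mfderiv 𝓘(ℝ, X) 𝓘(ℝ, E) (fun x => F (A x)) p v
      = mfderiv 𝓘(ℝ, Y) 𝓘(ℝ, E) F (A p) (fderiv ℝ A p v) := by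
  rw [← mfderiv_eq_fderiv]
  exact mfderiv_comp_apply (I' := 𝓘(ℝ, Y)) p hF hA.mdifferentiableAt v

theorem finrank_range_mfderiv_comp_le [FiniteDimensional ℝ E] {F : Y → M} {A : X → Y} {p : X}
    (hF : MDifferentiableAt 𝓘(ℝ, Y) 𝓘(ℝ, E) F (A p)) (hA : DifferentiableAt ℝ A p) :
    Module.finrank ℝ (LinearMap.range (mfderiv 𝓘(ℝ, X) 𝓘(ℝ, E) (fun x => F (A x)) p).toLinearMap)
      ≤ Module.finrank ℝ (LinearMap.range (mfderiv 𝓘(ℝ, Y) 𝓘(ℝ, E) F (A p)).toLinearMap) := by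
  refine Submodule.finrank_mono ?_
  rintro _ ⟨v, rfl⟩
  exact ⟨_, (mfderiv_comp_apply_of_differentiableAt hF hA v).symm⟩

variable (E) in
noncomputable def partials (α : ℝ × ℝ × ℝ → M) (p : ℝ × ℝ × ℝ) : E × E × E :=
  (mfderiv 𝓘(ℝ, ℝ × ℝ × ℝ) 𝓘(ℝ, E) α p (1, 0, 0),
    mfderiv 𝓘(ℝ, ℝ × ℝ × ℝ) 𝓘(ℝ, E) α p (0, 1, 0),
    mfderiv 𝓘(ℝ, ℝ × ℝ × ℝ) 𝓘(ℝ, E) α p (0, 0, 1))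

variable (E) in
def line (α : ℝ × ℝ × ℝ → M) (r s : ℝ) : Set (E × E × E) :=
  Set.range fun t => partials E α (r, s, t)

theorem isLaminated_iff {α : ℝ × ℝ × ℝ → M} :
    IsLaminated E α ↔ ∀ r s, LaminatedSet (line E α r s) := by
  simp only [LaminatedSet, line, Set.forall_mem_range, partials, Dependent]
  rfl

theorem Filter.EventuallyEq.partials_eq {α β : ℝ × ℝ × ℝ → M} {p : ℝ × ℝ × ℝ}
    (h : α =ᶠ[𝓝 p] β) : partials E α p = partials E β p := by
  unfold partials
  rw [h.mfderiv_eq]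
  rfl

theorem partials_comp_prodMap {α : ℝ × ℝ × ℝ → M} {f g k : ℝ → ℝ} {r s t : ℝ}
    (hα : MDifferentiableAt 𝓘(ℝ, ℝ × ℝ × ℝ) 𝓘(ℝ, E) α (f r, g s, k t))
    (hf : DifferentiableAt ℝ f r) (hg : DifferentiableAt ℝ g s) (hk : DifferentiableAt ℝ k t) :
    partials E (fun p => α (f p.1, g p.2.1, k p.2.2)) (r, s, t)
      = (deriv f r • (partials E α (f r, g s, k t)).1,
          deriv g s • (partials E α (f r, g s, k t)).2.1,
          deriv k t • (partials E α (f r, g s, k t)).2.2) := by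
  have hA := HasFDerivAt.prodMap (r, s, t) hf.hasDerivAt.hasFDerivAt
    (HasFDerivAt.prodMap (s, t) hg.hasDerivAt.hasFDerivAt hk.hasDerivAt.hasFDerivAt)
  have hcomp (v : ℝ × ℝ × ℝ) :
      mfderiv 𝓘(ℝ, ℝ × ℝ × ℝ) 𝓘(ℝ, E) (fun p => α (f p.1, g p.2.1, k p.2.2)) (r, s, t) v
        = mfderiv 𝓘(ℝ, ℝ × ℝ × ℝ) 𝓘(ℝ, E) α (f r, g s, k t)
            (fderiv ℝ (Prod.map f (Prod.map g k)) (r, s, t) v) :=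
    mfderiv_comp_apply_of_differentiableAt (A := Prod.map f (Prod.map g k)) hα
      hA.differentiableAt v
  have hL (c : ℝ) (v : ℝ × ℝ × ℝ) :=
    (mfderiv 𝓘(ℝ, ℝ × ℝ × ℝ) 𝓘(ℝ, E) α (f r, g s, k t)).map_smul c v
  have e₁ : fderiv ℝ (Prod.map f (Prod.map g k)) (r, s, t) (1, 0, 0) = deriv f r • (1, 0, 0) := by
    simp [hA.fderiv]
  have e₂ : fderiv ℝ (Prod.map f (Prod.map g k)) (r, s, t) (0, 1, 0) = deriv g s • (0, 1, 0) := by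
    simp [hA.fderiv]
  have e₃ : fderiv ℝ (Prod.map f (Prod.map g k)) (r, s, t) (0, 0, 1) = deriv k t • (0, 0, 1) := by
    simp [hA.fderiv]
  simp only [partials, hcomp, e₁, e₂, e₃]
  exact Prod.ext (hL _ _) (Prod.ext (hL _ _) (hL _ _))

theorem dependent_partials_of_finrank_le_one [FiniteDimensional ℝ E] {α : ℝ × ℝ × ℝ → M}
    {p : ℝ × ℝ × ℝ}
    (h : Module.finrank ℝ
      (LinearMap.range (mfderiv 𝓘(ℝ, ℝ × ℝ × ℝ) 𝓘(ℝ, E) α p).toLinearMap) ≤ 1) :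
    Dependent (partials E α p).1 (partials E α p).2.2 :=
  dependent_of_mem_of_finrank_le_one h ⟨_, rfl⟩ ⟨_, rfl⟩

end Calculus

section Gluing

open Topology

variable {X Y : Type*} [TopologicalSpace X] {τ : X → ℝ} {G₁ G₂ : X → Y} {δ : ℝ}

theorem ite_eventuallyEq_left (hτ : Continuous τ) (hδ : 0 < δ)
    (hov : ∀ x, 1 / 2 - δ < τ x → τ x < 1 / 2 + δ → G₁ x = G₂ x) {x : X} (hx : τ x ≤ 1 / 2) :
    (fun y => if τ y ≤ 1 / 2 then G₁ y else G₂ y) =ᶠ[𝓝 x] G₁ := by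
  filter_upwards [hτ.continuousAt.eventually (gt_mem_nhds (show τ x < 1 / 2 + δ by linarith))]
    with y hy
  split_ifs with h
  · rfl
  · exact (hov y (by linarith) hy).symm

theorem ite_eventuallyEq_right (hτ : Continuous τ) (hδ : 0 < δ)
    (hov : ∀ x, 1 / 2 - δ < τ x → τ x < 1 / 2 + δ → G₁ x = G₂ x) {x : X} (hx : 1 / 2 < τ x) :
    (fun y => if τ y ≤ 1 / 2 then G₁ y else G₂ y) =ᶠ[𝓝 x] G₂ := by
  filter_upwards [hτ.continuousAt.eventually (lt_mem_nhds (show 1 / 2 - δ < τ x by linarith))]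
    with y hy
  split_ifs with h
  · exact hov y hy (by linarith)
  · rfl

end Gluing

section GluingManifold

omit [FiniteDimensional ℝ E] [IsManifold 𝓘(ℝ, E) ∞ M]

variable {E} {X : Type*} [NormedAddCommGroup X] [NormedSpace ℝ X]
  {τ : X → ℝ} {G₁ G₂ : X → M} {δ : ℝ}

theorem contMDiff_ite (hτ : Continuous τ) (hδ : 0 < δ)
    (hov : ∀ x, 1 / 2 - δ < τ x → τ x < 1 / 2 + δ → G₁ x = G₂ x)
    (h₁ : ContMDiff 𝓘(ℝ, X) 𝓘(ℝ, E) (⊤ : ℕ∞) G₁) (h₂ : ContMDiff 𝓘(ℝ, X) 𝓘(ℝ, E) (⊤ : ℕ∞) G₂) :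
    ContMDiff 𝓘(ℝ, X) 𝓘(ℝ, E) (⊤ : ℕ∞) (fun x => if τ x ≤ 1 / 2 then G₁ x else G₂ x) := by
  intro x
  rcases le_or_gt (τ x) (1 / 2) with hx | hx
  · exact (h₁ x).congr_of_eventuallyEq (ite_eventuallyEq_left hτ hδ hov hx)
  · exact (h₂ x).congr_of_eventuallyEq (ite_eventuallyEq_right hτ hδ hov hx)

theorem finrank_range_mfderiv_ite_le (hτ : Continuous τ) (hδ : 0 < δ)
    (hov : ∀ x, 1 / 2 - δ < τ x → τ x < 1 / 2 + δ → G₁ x = G₂ x) {n : ℕ}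
    (h₁ : ∀ x, Module.finrank ℝ (LinearMap.range (mfderiv 𝓘(ℝ, X) 𝓘(ℝ, E) G₁ x).toLinearMap) ≤ n)
    (h₂ : ∀ x, Module.finrank ℝ (LinearMap.range (mfderiv 𝓘(ℝ, X) 𝓘(ℝ, E) G₂ x).toLinearMap) ≤ n)
    (x : X) :
    Module.finrank ℝ (LinearMap.range (mfderiv 𝓘(ℝ, X) 𝓘(ℝ, E)
      (fun x => if τ x ≤ 1 / 2 then G₁ x else G₂ x) x).toLinearMap) ≤ n := by
  rcases le_or_gt (τ x) (1 / 2) with hx | hx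
  · rw [(ite_eventuallyEq_left hτ hδ hov hx).mfderiv_eq]; exact h₁ x
  · rw [(ite_eventuallyEq_right hτ hδ hov hx).mfderiv_eq]; exact h₂ x

end GluingManifold

theorem exists_pos_two_mul_le {ε₁ ε₂ : ℝ} (h₁ : 0 < ε₁) (h₂ : 0 < ε₂) :
    ∃ ε > 0, 2 * ε ≤ ε₁ ∧ 2 * ε ≤ ε₂ ∧ 4 * ε ≤ 1 :=
  ⟨min (min ε₁ ε₂) 1 / 4, by positivity, by
    have := min_le_left (min ε₁ ε₂) 1; have := min_le_left ε₁ ε₂; linarith, by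
    have := min_le_left (min ε₁ ε₂) 1; have := min_le_right ε₁ ε₂; linarith, by
    have := min_le_right (min ε₁ ε₂) 1; linarith⟩

section Concatenation

variable {E}

omit [FiniteDimensional ℝ E] [IsManifold 𝓘(ℝ, E) ∞ M]

noncomputable def tConcat (h₁ h₂ : ℝ × ℝ → M) : ℝ × ℝ → M := fun p =>
  if p.2 ≤ 1 / 2 then h₁ (p.1, 2 * p.2) else h₂ (p.1, 2 * p.2 - 1)

theorem isRank1Homotopy_tConcat [FiniteDimensional ℝ E] {h₁ h₂ : ℝ × ℝ → M}
    (hh₁ : IsRank1Homotopy E h₁) (hh₂ : IsRank1Homotopy E h₂) (hm : h₁ (0, 1) = h₂ (0, 0)) :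
    IsRank1Homotopy E (tConcat h₁ h₂) := by
  obtain ⟨⟨hs₁, ⟨ε₁, hε₁, r0₁, r1₁, t0₁, t1₁⟩, b0₁, b1₁⟩, rk₁⟩ := hh₁
  obtain ⟨⟨hs₂, ⟨ε₂, hε₂, r0₂, r1₂, t0₂, t1₂⟩, b0₂, b1₂⟩, rk₂⟩ := hh₂
  obtain ⟨ε, hε, hεε₁, hεε₂, hε1⟩ := exists_pos_two_mul_le hε₁ hε₂
  have hov (p : ℝ × ℝ) (hp : 1 / 2 - ε < p.2) (hp' : p.2 < 1 / 2 + ε) :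
      h₁ (p.1, 2 * p.2) = h₂ (p.1, 2 * p.2 - 1) := by
    rw [t1₁ _ _ (by linarith), t0₂ _ _ (by linarith), b1₁ _ 0, hm, b0₂ 0]
  have hA₁ : ContDiff ℝ ∞ fun p : ℝ × ℝ => (p.1, 2 * p.2) := by fun_prop
  have hA₂ : ContDiff ℝ ∞ fun p : ℝ × ℝ => (p.1, 2 * p.2 - 1) := by fun_prop
  refine ⟨⟨contMDiff_ite continuous_snd hε hov (hs₁.comp hA₁.contMDiff) (hs₂.comp hA₂.contMDiff),
    ⟨ε, hε, ?_, ?_, ?_, ?_⟩, ?_, ?_⟩, finrank_range_mfderiv_ite_le continuous_snd hε hov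
      (fun p => (finrank_range_mfderiv_comp_le (hs₁.mdifferentiableAt (by simp))
        (hA₁.differentiable (by simp) p)).trans (rk₁ _))
      (fun p => (finrank_range_mfderiv_comp_le (hs₂.mdifferentiableAt (by simp))
        (hA₂.differentiable (by simp) p)).trans (rk₂ _))⟩
  · intro r t hr
    simp only [tConcat]
    split_ifs
    exacts [r0₁ _ _ (by linarith), r0₂ _ _ (by linarith)]
  · intro r t hr
    simp only [tConcat]
    split_ifs
    exacts [r1₁ _ _ (by linarith), r1₂ _ _ (by linarith)]
  · intro r t ht
    simp only [tConcat, if_pos (show t ≤ 1 / 2 by linarith)]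
    rw [t0₁ _ _ (by linarith)]
    norm_num
  · intro r t ht
    simp only [tConcat, if_neg (show ¬t ≤ 1 / 2 by linarith)]
    rw [t1₂ _ _ (by linarith)]
    norm_num
  · intro r r'
    simp only [tConcat]
    norm_num [b0₁ r r']
  · intro r r'
    simp only [tConcat]
    norm_num [b1₂ r r']

end Concatenation

section Concatenation3

variable {E}

omit [FiniteDimensional ℝ E] [IsManifold 𝓘(ℝ, E) ∞ M]

noncomputable def tConcat3 (α₁ α₂ : ℝ × ℝ × ℝ → M) : ℝ × ℝ × ℝ → M := fun p =>
  if p.2.2 ≤ 1 / 2 then α₁ (p.1, p.2.1, 2 * p.2.2) else α₂ (p.1, p.2.1, 2 * p.2.2 - 1)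

variable {α₁ α₂ : ℝ × ℝ × ℝ → M}

theorem exists_tConcat3_overlap (hα₁ : IsThreePath E α₁) (hα₂ : IsThreePath E α₂)
    (hm : α₁ (0, 0, 1) = α₂ (0, 0, 0)) :
    ∃ δ > 0, ∀ p : ℝ × ℝ × ℝ, 1 / 2 - δ < p.2.2 → p.2.2 < 1 / 2 + δ →
      α₁ (p.1, p.2.1, 2 * p.2.2) = α₂ (p.1, p.2.1, 2 * p.2.2 - 1) := by
  obtain ⟨-, ⟨ε₁, hε₁, -, -, -, -, -, t1₁⟩, -, b1₁⟩ := hα₁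
  obtain ⟨-, ⟨ε₂, hε₂, -, -, -, -, t0₂, -⟩, b0₂, -⟩ := hα₂
  obtain ⟨ε, hε, hεε₁, hεε₂, -⟩ := exists_pos_two_mul_le hε₁ hε₂
  refine ⟨ε, hε, fun p hp hp' => ?_⟩
  rw [t1₁ _ _ _ (by linarith), t0₂ _ _ _ (by linarith), b1₁ _ _ 0 0, hm, b0₂ 0 0]

theorem isThreePath_tConcat3 (hα₁ : IsThreePath E α₁) (hα₂ : IsThreePath E α₂)
    (hm : α₁ (0, 0, 1) = α₂ (0, 0, 0)) : IsThreePath E (tConcat3 α₁ α₂) := by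
  obtain ⟨δ, hδ, hov⟩ := exists_tConcat3_overlap hα₁ hα₂ hm
  obtain ⟨hs₁, ⟨ε₁, hε₁, r0₁, r1₁, s0₁, s1₁, t0₁, t1₁⟩, b0₁, b1₁⟩ := hα₁
  obtain ⟨hs₂, ⟨ε₂, hε₂, r0₂, r1₂, s0₂, s1₂, t0₂, t1₂⟩, b0₂, b1₂⟩ := hα₂
  obtain ⟨ε, hε, hεε₁, hεε₂, hε1⟩ := exists_pos_two_mul_le hε₁ hε₂
  have hA₁ : ContDiff ℝ ∞ fun p : ℝ × ℝ × ℝ => (p.1, p.2.1, 2 * p.2.2) := by fun_prop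
  have hA₂ : ContDiff ℝ ∞ fun p : ℝ × ℝ × ℝ => (p.1, p.2.1, 2 * p.2.2 - 1) := by fun_prop
  refine ⟨contMDiff_ite (continuous_snd.snd) hδ hov (hs₁.comp hA₁.contMDiff)
    (hs₂.comp hA₂.contMDiff), ⟨ε, hε, ?_, ?_, ?_, ?_, ?_, ?_⟩, ?_, ?_⟩
  · intro r s t hr
    simp only [tConcat3]
    split_ifs
    exacts [r0₁ _ _ _ (by linarith), r0₂ _ _ _ (by linarith)]
  · intro r s t hr
    simp only [tConcat3]
    split_ifs
    exacts [r1₁ _ _ _ (by linarith), r1₂ _ _ _ (by linarith)]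
  · intro r s t hs
    simp only [tConcat3]
    split_ifs
    exacts [s0₁ _ _ _ (by linarith), s0₂ _ _ _ (by linarith)]
  · intro r s t hs
    simp only [tConcat3]
    split_ifs
    exacts [s1₁ _ _ _ (by linarith), s1₂ _ _ _ (by linarith)]
  · intro r s t ht
    simp only [tConcat3, if_pos (show t ≤ 1 / 2 by linarith)]
    rw [t0₁ _ _ _ (by linarith)]
    norm_num
  · intro r s t ht
    simp only [tConcat3, if_neg (show ¬t ≤ 1 / 2 by linarith)]
    rw [t1₂ _ _ _ (by linarith)]
    norm_num
  · intro r s r' s'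
    simp only [tConcat3]
    norm_num [b0₁ r s r' s']
  · intro r s r' s'
    simp only [tConcat3]
    norm_num [b1₂ r s r' s']

theorem isRank2Homotopy_tConcat3 [FiniteDimensional ℝ E] (hα₁ : IsRank2Homotopy E α₁)
    (hα₂ : IsRank2Homotopy E α₂) (hm : α₁ (0, 0, 1) = α₂ (0, 0, 0)) : IsRank2Homotopy E (tConcat3 α₁ α₂) := by
  obtain ⟨hp₁, rk₁, hh0₁, hh1₁⟩ := hα₁
  obtain ⟨hp₂, rk₂, hh0₂, hh1₂⟩ := hα₂
  obtain ⟨δ, hδ, hov⟩ := exists_tConcat3_overlap hp₁ hp₂ hm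
  have hA₁ : ContDiff ℝ ∞ fun p : ℝ × ℝ × ℝ => (p.1, p.2.1, 2 * p.2.2) := by fun_prop
  have hA₂ : ContDiff ℝ ∞ fun p : ℝ × ℝ × ℝ => (p.1, p.2.1, 2 * p.2.2 - 1) := by fun_prop
  refine ⟨isThreePath_tConcat3 hp₁ hp₂ hm,
    finrank_range_mfderiv_ite_le (continuous_snd.snd) hδ hov
      (fun p => (finrank_range_mfderiv_comp_le (hp₁.1.mdifferentiableAt (by simp))
        (hA₁.differentiable (by simp) p)).trans (rk₁ _))
      (fun p => (finrank_range_mfderiv_comp_le (hp₂.1.mdifferentiableAt (by simp))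
        (hA₂.differentiable (by simp) p)).trans (rk₂ _)),
    isRank1Homotopy_tConcat hh0₁ hh0₂ hm, isRank1Homotopy_tConcat hh1₁ hh1₂ ?_⟩
  rw [hp₁.2.2.2 0 1 0 0, hm, hp₂.2.2.1 0 0 0 1]

theorem line_tConcat3_subset (hα₁ : IsThreePath E α₁) (hα₂ : IsThreePath E α₂)
    (hm : α₁ (0, 0, 1) = α₂ (0, 0, 0)) (r s : ℝ) :
    line E (tConcat3 α₁ α₂) r s ⊆ (fun x => ((1 : ℝ) • x.1, (1 : ℝ) • x.2.1, (2 : ℝ) • x.2.2)) ''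
      (line E α₁ r s ∪ line E α₂ r s) := by
  obtain ⟨δ, hδ, hov⟩ := exists_tConcat3_overlap hα₁ hα₂ hm
  rintro _ ⟨t, rfl⟩
  rcases le_or_gt t (1 / 2) with ht | ht
  · refine ⟨_, .inl ⟨2 * t, rfl⟩, ?_⟩
    have e : partials E (tConcat3 α₁ α₂) (r, s, t)
        = partials E (fun p => α₁ (p.1, p.2.1, 2 * p.2.2)) (r, s, t) :=
      (ite_eventuallyEq_left (continuous_snd.snd) hδ hov ht).partials_eq
    dsimp only
    rw [e]
    have := partials_comp_prodMap (f := id) (g := id) (k := fun t => 2 * t) (r := r) (s := s)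
      (t := t) (hα₁.1.mdifferentiableAt (by simp)) differentiableAt_id differentiableAt_id
      (by fun_prop)
    simp only [deriv_id, id] at this
    simpa using this.symm
  · refine ⟨_, .inr ⟨2 * t - 1, rfl⟩, ?_⟩
    have e : partials E (tConcat3 α₁ α₂) (r, s, t)
        = partials E (fun p => α₂ (p.1, p.2.1, 2 * p.2.2 - 1)) (r, s, t) :=
      (ite_eventuallyEq_right (continuous_snd.snd) hδ hov ht).partials_eq
    dsimp only
    rw [e]
    have := partials_comp_prodMap (f := id) (g := id) (k := fun t => 2 * t - 1) (r := r) (s := s)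
      (t := t) (hα₂.1.mdifferentiableAt (by simp)) differentiableAt_id differentiableAt_id
      (by fun_prop)
    simp only [deriv_id, id] at this
    simpa using this.symm

theorem isLaminatedRank2Homotopy_tConcat3 [FiniteDimensional ℝ E] (hα₁ : IsRank2Homotopy E α₁)
    (hα₂ : IsRank2Homotopy E α₂) (hm : α₁ (0, 0, 1) = α₂ (0, 0, 0))
    (hlam : ∀ r s, LaminatedSet (line E α₁ r s ∪ line E α₂ r s)) :
    IsLaminatedRank2Homotopy E (tConcat3 α₁ α₂) :=
  ⟨isRank2Homotopy_tConcat3 hα₁ hα₂ hm, isLaminated_iff.2 fun r s =>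
    ((hlam r s).image_smul 1 1 2).mono (line_tConcat3_subset hα₁.1 hα₂.1 hm r s)⟩

end Concatenation3

section Steps

open Topology

def IsSmoothStep (φ : ℝ → ℝ) : Prop :=
  ContDiff ℝ ∞ φ ∧ ∃ ε > 0, (∀ r ≤ ε, φ r = 0) ∧ ∀ r, 1 - ε ≤ r → φ r = 1

theorem IsSmoothStep.apply_zero {φ : ℝ → ℝ} (hφ : IsSmoothStep φ) : φ 0 = 0 := by
  obtain ⟨-, ε, hε, h0, -⟩ := hφ
  exact h0 0 hε.le

theorem IsSmoothStep.apply_one {φ : ℝ → ℝ} (hφ : IsSmoothStep φ) : φ 1 = 1 := by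
  obtain ⟨-, ε, hε, -, h1⟩ := hφ
  exact h1 1 (by linarith)

theorem IsSmoothStep.differentiable {φ : ℝ → ℝ} (hφ : IsSmoothStep φ) : Differentiable ℝ φ :=
  hφ.1.differentiable (by simp)

noncomputable def smoothStep (a b r : ℝ) : ℝ := Real.smoothTransition ((r - a) / (b - a))

variable {a b r : ℝ}

theorem smoothStep_of_le (hab : a ≤ b) (hr : r ≤ a) : smoothStep a b r = 0 :=
  Real.smoothTransition.zero_of_nonpos (div_nonpos_of_nonpos_of_nonneg (by linarith) (by linarith))

theorem smoothStep_of_ge (hab : a < b) (hr : b ≤ r) : smoothStep a b r = 1 :=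
  Real.smoothTransition.one_of_one_le ((one_le_div (by linarith)).2 (by linarith))

theorem contDiff_smoothStep : ContDiff ℝ ∞ (smoothStep a b) :=
  Real.smoothTransition.contDiff.comp (by fun_prop)

theorem deriv_smoothStep_of_notMem (hab : a < b) (hr : r ∉ Set.Icc a b) :
    deriv (smoothStep a b) r = 0 := by
  by_cases hra : r < a
  · have hev : smoothStep a b =ᶠ[𝓝 r] fun _ => 0 :=
      (eventually_lt_nhds hra).mono fun y hy => smoothStep_of_le hab.le hy.le
    rw [hev.deriv_eq, deriv_const]
  · have hrb : b < r := lt_of_not_ge fun h => hr ⟨not_lt.1 hra, h⟩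
    have hev : smoothStep a b =ᶠ[𝓝 r] fun _ => 1 :=
      (eventually_gt_nhds hrb).mono fun y hy => smoothStep_of_ge hab hy.le
    rw [hev.deriv_eq, deriv_const]

theorem isSmoothStep_smoothStep (ha : 0 < a) (hab : a < b) (hb : b < 1) :
    IsSmoothStep (smoothStep a b) :=
  ⟨contDiff_smoothStep, min a (1 - b), lt_min ha (by linarith),
    fun r hr => smoothStep_of_le hab.le (hr.trans (min_le_left _ _)),
    fun r hr => smoothStep_of_ge hab (by linarith [min_le_right a (1 - b)])⟩

theorem exists_isSmoothStep_deriv_eq_zero_or :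
    ∃ φ ψ : ℝ → ℝ, IsSmoothStep φ ∧ IsSmoothStep ψ ∧ ∀ r, deriv φ r = 0 ∨ deriv ψ r = 0 := by
  refine ⟨smoothStep (1 / 5) (2 / 5), smoothStep (3 / 5) (4 / 5),
    isSmoothStep_smoothStep (by norm_num) (by norm_num) (by norm_num),
    isSmoothStep_smoothStep (by norm_num) (by norm_num) (by norm_num), fun r => ?_⟩
  rcases le_or_gt r (1 / 2) with hr | hr
  · exact .inr (deriv_smoothStep_of_notMem (by norm_num) fun h => by linarith [h.1])
  · exact .inl (deriv_smoothStep_of_notMem (by norm_num) fun h => by linarith [h.2])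

end Steps

section Reparametrization

variable {E}

omit [FiniteDimensional ℝ E] [IsManifold 𝓘(ℝ, E) ∞ M]

theorem IsRank1Homotopy.comp_step [FiniteDimensional ℝ E] {h : ℝ × ℝ → M}
    (hh : IsRank1Homotopy E h) {φ : ℝ → ℝ} (hφ : IsSmoothStep φ) : IsRank1Homotopy E (fun p => h (φ p.1, p.2)) := by
  obtain ⟨⟨hs, ⟨ε, hε, -, -, t0, t1⟩, b0, b1⟩, rk⟩ := hh
  obtain ⟨hφs, ε', hε', hφ0, hφ1⟩ := hφ
  have hA : ContDiff ℝ ∞ fun p : ℝ × ℝ => (φ p.1, p.2) := by fun_prop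
  have hεε := min_le_left ε ε'
  have hε'ε := min_le_right ε ε'
  refine ⟨⟨hs.comp hA.contMDiff, ⟨min ε ε', lt_min hε hε', fun r t hr => ?_, fun r t hr => ?_,
    fun r t ht => t0 _ _ (by linarith), fun r t ht => t1 _ _ (by linarith)⟩,
    fun r r' => b0 _ _, fun r r' => b1 _ _⟩,
    fun p => (finrank_range_mfderiv_comp_le (hs.mdifferentiableAt (by simp))
      (hA.differentiable (by simp) p)).trans (rk _)⟩
  · simp only [hφ0 r (by linarith), hφ0 0 hε'.le]
  · simp only [hφ1 r (by linarith), hφ1 1 (by linarith)]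

noncomputable def reparamR (φ : ℝ → ℝ) (α : ℝ × ℝ × ℝ → M) : ℝ × ℝ × ℝ → M := fun p =>
  α (φ p.1, p.2.1, p.2.2)

theorem isRank2Homotopy_reparamR [FiniteDimensional ℝ E] {α : ℝ × ℝ × ℝ → M}
    (hα : IsRank2Homotopy E α) {φ : ℝ → ℝ} (hφ : IsSmoothStep φ) : IsRank2Homotopy E (reparamR φ α) := by
  obtain ⟨⟨hs, ⟨ε, hε, -, -, s0, s1, t0, t1⟩, b0, b1⟩, rk, hh0, hh1⟩ := hα
  obtain ⟨hφs, ε', hε', hφ0, hφ1⟩ := hφ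
  have hA : ContDiff ℝ ∞ fun p : ℝ × ℝ × ℝ => (φ p.1, p.2.1, p.2.2) := by fun_prop
  have hεε := min_le_left ε ε'
  have hε'ε := min_le_right ε ε'
  refine ⟨⟨hs.comp hA.contMDiff, ⟨min ε ε', lt_min hε hε', fun r s t hr => ?_,
    fun r s t hr => ?_, fun r s t hs => s0 _ _ _ (by linarith),
    fun r s t hs => s1 _ _ _ (by linarith),
    fun r s t ht => t0 _ _ _ (by linarith), fun r s t ht => t1 _ _ _ (by linarith)⟩,
    fun r s r' s' => b0 _ _ _ _, fun r s r' s' => b1 _ _ _ _⟩,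
    fun p => (finrank_range_mfderiv_comp_le (hs.mdifferentiableAt (by simp))
      (hA.differentiable (by simp) p)).trans (rk _),
    hh0.comp_step ⟨hφs, ε', hε', hφ0, hφ1⟩, hh1.comp_step ⟨hφs, ε', hε', hφ0, hφ1⟩⟩
  · simp only [reparamR, hφ0 r (by linarith), hφ0 0 hε'.le]
  · simp only [reparamR, hφ1 r (by linarith), hφ1 1 (by linarith)]

theorem line_reparamR_subset {α : ℝ × ℝ × ℝ → M} (hα : ContMDiff 𝓘(ℝ, ℝ × ℝ × ℝ) 𝓘(ℝ, E) (⊤ : ℕ∞) α)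
    {φ : ℝ → ℝ} (hφ : Differentiable ℝ φ) (r s : ℝ) :
    line E (reparamR φ α) r s ⊆
      (fun x => (deriv φ r • x.1, (1 : ℝ) • x.2.1, (1 : ℝ) • x.2.2)) '' line E α (φ r) s := by
  rintro _ ⟨t, rfl⟩
  refine ⟨_, ⟨t, rfl⟩, ?_⟩
  have := partials_comp_prodMap (g := id) (k := id) (r := r) (s := s) (t := t)
    (hα.mdifferentiableAt (by simp)) (hφ r) differentiableAt_id differentiableAt_id
  simp only [deriv_id, id] at this
  exact this.symm

noncomputable def liftS (h : ℝ × ℝ → M) : ℝ × ℝ × ℝ → M := fun p => h (p.1, p.2.2)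

theorem isRank2Homotopy_liftS [FiniteDimensional ℝ E] {h : ℝ × ℝ → M} (hh : IsRank1Homotopy E h) :
    IsRank2Homotopy E (liftS h) := by
  obtain ⟨⟨hs, ⟨ε, hε, r0, r1, t0, t1⟩, b0, b1⟩, rk⟩ := hh
  have hA : ContDiff ℝ ∞ fun p : ℝ × ℝ × ℝ => (p.1, p.2.2) := by fun_prop
  exact ⟨⟨hs.comp hA.contMDiff, ⟨ε, hε, fun r s t hr => r0 r t hr, fun r s t hr => r1 r t hr,
    fun _ _ _ _ => rfl, fun _ _ _ _ => rfl, fun r s t ht => t0 r t ht, fun r s t ht => t1 r t ht⟩,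
    fun r s r' s' => b0 r r', fun r s r' s' => b1 r r'⟩,
    fun p => (finrank_range_mfderiv_comp_le (hs.mdifferentiableAt (by simp))
      (hA.differentiable (by simp) p)).trans ((rk _).trans (by norm_num)),
    ⟨⟨hs, ⟨ε, hε, r0, r1, t0, t1⟩, b0, b1⟩, rk⟩, ⟨⟨hs, ⟨ε, hε, r0, r1, t0, t1⟩, b0, b1⟩, rk⟩⟩

theorem partials_liftS_snd {h : ℝ × ℝ → M} (hh : ContMDiff 𝓘(ℝ, ℝ × ℝ) 𝓘(ℝ, E) (⊤ : ℕ∞) h)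
    (p : ℝ × ℝ × ℝ) : (partials E (liftS h) p).2.1 = 0 := by
  have hsm : ContMDiff 𝓘(ℝ, ℝ × ℝ × ℝ) 𝓘(ℝ, E) (⊤ : ℕ∞) (liftS h) :=
    hh.comp (contDiff_fst.prodMk (contDiff_snd.comp contDiff_snd)).contMDiff
  have := partials_comp_prodMap (f := id) (g := fun _ => (0 : ℝ)) (k := id) (r := p.1)
    (s := p.2.1) (t := p.2.2) (hsm.mdifferentiableAt (by simp)) differentiableAt_id
    (differentiableAt_const _) differentiableAt_id
  simp only [deriv_const, zero_smul] at this
  exact congrArg (fun x => x.2.1) this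

end Reparametrization

section Whiskering

variable {E}

omit [FiniteDimensional ℝ E] [IsManifold 𝓘(ℝ, E) ∞ M]

theorem laminatedSet_line_union [FiniteDimensional ℝ E] {h : ℝ × ℝ → M} {β : ℝ × ℝ × ℝ → M}
    (hh : IsRank1Homotopy E h) (hβ : IsLaminatedRank2Homotopy E β) {φ ψ : ℝ → ℝ}
    (hφ : Differentiable ℝ φ) (hψ : Differentiable ℝ ψ) {r : ℝ}
    (hr : deriv φ r = 0 ∨ deriv ψ r = 0) (s : ℝ) :
    LaminatedSet (line E (reparamR φ (liftS h)) r s ∪ line E (reparamR ψ β) r s) := by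
  have hH := line_reparamR_subset (isRank2Homotopy_liftS hh).1.1 hφ r s
  have hB := line_reparamR_subset hβ.1.1.1 hψ r s
  rcases hr with hr | hr
  · rw [Set.union_comm]
    refine ((isLaminated_iff.1 hβ.2 (ψ r) s).image_smul _ _ _ |>.mono hB)
      |>.union_of_fst_snd_eq_zero ?_
    intro _ hx
    obtain ⟨_, ⟨t, rfl⟩, rfl⟩ := hH hx
    simp [hr, partials_liftS_snd hh.1.1]
  · refine laminatedSet_union_of_fst_eq_zero ?_ fun _ hx => ?_
    · rintro _ ⟨t, rfl⟩
      refine dependent_partials_of_finrank_le_one ((finrank_range_mfderiv_comp_le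
        (F := h) (A := fun p : ℝ × ℝ × ℝ => (φ p.1, p.2.2)) (hh.1.1.mdifferentiableAt (by simp))
        (by fun_prop)).trans (hh.2 _))
    · obtain ⟨_, -, rfl⟩ := hB hx
      simp [hr]

end Whiskering

theorem whisker_lamRank2Homotopic (g g' : ℝ × ℝ → M) (γ γ' : ℝ → M)
    (Hg : LamRank2Homotopic E g g') (Hγ : Rank1Homotopic E γ γ') :
    (γ 1 = g (0, 0) → LamRank2Homotopic E (leftWhisker γ g) (leftWhisker γ' g')) ∧
    (g (0, 1) = γ 0 → LamRank2Homotopic E (rightWhisker g γ) (rightWhisker g' γ')) := by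
  obtain ⟨β, hβ, hβ0, hβ1⟩ := Hg
  obtain ⟨h, hh, hh0, hh1⟩ := Hγ
  obtain ⟨φ, ψ, hφ, hψ, hφψ⟩ := exists_isSmoothStep_deriv_eq_zero_or
  set H := reparamR φ (liftS h)
  set B := reparamR ψ β
  have hH : IsRank2Homotopy E H := isRank2Homotopy_reparamR (isRank2Homotopy_liftS hh) hφ
  have hB : IsRank2Homotopy E B := isRank2Homotopy_reparamR hβ.1 hψ
  have hlam (r s : ℝ) : LaminatedSet (line E H r s ∪ line E B r s) :=
    laminatedSet_line_union hh hβ hφ.differentiable hψ.differentiable (hφψ r) s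
  have hlam' (r s : ℝ) : LaminatedSet (line E B r s ∪ line E H r s) :=
    Set.union_comm (line E H r s) _ ▸ hlam r s
  refine ⟨fun hm => ⟨tConcat3 H B, isLaminatedRank2Homotopy_tConcat3 hH hB ?_ hlam,
    fun s t => ?_, fun s t => ?_⟩, fun hm => ⟨tConcat3 B H,
      isLaminatedRank2Homotopy_tConcat3 hB hH ?_ hlam', fun s t => ?_, fun s t => ?_⟩⟩ <;>
  simp only [tConcat3, H, B, reparamR, liftS, leftWhisker, rightWhisker, hφ.apply_zero,
    hψ.apply_zero, hφ.apply_one, hψ.apply_one, hh0, hh1, hβ0, hβ1, hm]
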